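/- arXiv:2501.10858 — 6 statements merged into one kernel-verified Lean document; each statement's English description precedes it below -/
import Mathlib

section
/- With the setup of Theorem 1 and θ = 1/2 (majority vote), the aggregated prediction set C^{1/2} satisfies P(c* ∈ C^{1/2}) ≥ 1 − 2α. -/
open MeasureTheory
open scoped Classical ENNReal

/-- Majority vote (θ = 1/2) aggregation has coverage at least 1 - 2α. -/
theorem majority_vote_coverage {Ω : Type*} [MeasurableSpace Ω] (μ : Measure Ω)
    [IsProbabilityMeasure μ] {𝒴 : Type*} [Fintype 𝒴] (n : ℕ) (hn : 0 < n)
    (C : Fin n → Ω → Set 𝒴) (cstar : 𝒴)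
    (hmeas : ∀ i (c : 𝒴), MeasurableSet {ω | c ∈ C i ω})
    (α : ℝ) (hcov : ∀ i, ENNReal.ofReal (1 - α) ≤ μ {ω | cstar ∈ C i ω}) :
    ENNReal.ofReal (1 - 2 * α) ≤
      μ {ω | (1/2 : ℝ) < (1 / n : ℝ) * ∑ i, (if cstar ∈ C i ω then (1 : ℝ) else 0)} := by
  -- rule out α < 0
  by_cases hα0 : α < 0
  · exfalso
    have h1 := hcov ⟨0, hn⟩
    have h2 : μ {ω | cstar ∈ C ⟨0, hn⟩ ω} ≤ 1 := prob_le_one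
    have h3 : ENNReal.ofReal (1 - α) ≤ 1 := h1.trans h2
    rw [ENNReal.ofReal_le_one] at h3
    linarith
  push_neg at hα0
  by_cases hα2 : (1:ℝ)/2 ≤ α
  · have h0 : ENNReal.ofReal (1 - 2*α) = 0 := by
      rw [ENNReal.ofReal_eq_zero]; linarith
    simp [h0]
  push_neg at hα2
  have hn' : (0:ℝ) < n := by exact_mod_cast hn
  set miss : Fin n → Set Ω := fun i => {ω | cstar ∈ C i ω}ᶜ with hmissdef
  have hmm : ∀ i, MeasurableSet (miss i) := fun i => (hmeas i cstar).compl
  set g : Ω → ℝ≥0∞ := fun ω => ∑ i, (miss i).indicator 1 ω with hgdef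
  have hgmeas : Measurable g :=
    Finset.measurable_sum _ fun i _ => measurable_one.indicator (hmm i)
  have hint : ∫⁻ ω, g ω ∂μ = ∑ i, μ (miss i) := by
    rw [hgdef]
    rw [lintegral_finset_sum _ fun i _ => measurable_one.indicator (hmm i)]
    refine Finset.sum_congr rfl fun i _ => ?_
    exact lintegral_indicator_one (hmm i)
  have hmissle : ∀ i, μ (miss i) ≤ ENNReal.ofReal α := by
    intro i
    have h1 := hcov i
    have h2 : μ (miss i) = 1 - μ {ω | cstar ∈ C i ω} :=
      prob_compl_eq_one_sub (hmeas i cstar)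
    rw [h2]
    calc 1 - μ {ω | cstar ∈ C i ω} ≤ 1 - ENNReal.ofReal (1 - α) :=
          tsub_le_tsub_left h1 1
      _ = ENNReal.ofReal α := by
          rw [← ENNReal.ofReal_one, ← ENNReal.ofReal_sub _ (by linarith : (0:ℝ) ≤ 1 - α)]
          norm_num
  have hintle : ∫⁻ ω, g ω ∂μ ≤ ENNReal.ofReal ((n:ℝ) * α) := by
    rw [hint]
    calc ∑ i, μ (miss i) ≤ ∑ _i : Fin n, ENNReal.ofReal α :=
          Finset.sum_le_sum fun i _ => hmissle i
      _ = (n : ℝ≥0∞) * ENNReal.ofReal α := by simp [Finset.sum_const, mul_comm]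
      _ = ENNReal.ofReal ((n:ℝ) * α) := by
          rw [ENNReal.ofReal_mul (le_of_lt hn'), ENNReal.ofReal_natCast]
  set ε : ℝ≥0∞ := ENNReal.ofReal ((n:ℝ)/2) with hεdef
  have hε0 : ε ≠ 0 := by
    rw [hεdef]; simp [ENNReal.ofReal_eq_zero]; linarith
  have hεt : ε ≠ ⊤ := ENNReal.ofReal_ne_top
  set B : Set Ω := {ω | ε ≤ g ω} with hBdef
  have hBmeas : MeasurableSet B := measurableSet_le measurable_const hgmeas
  have hmarkov : ε * μ B ≤ ∫⁻ ω, g ω ∂μ :=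
    mul_meas_ge_le_lintegral₀ hgmeas.aemeasurable ε
  have hBle : μ B ≤ ENNReal.ofReal (2*α) := by
    rw [← ENNReal.mul_le_mul_iff_right hε0 hεt]
    calc ε * μ B ≤ ENNReal.ofReal ((n:ℝ) * α) := hmarkov.trans hintle
      _ = ε * ENNReal.ofReal (2*α) := by
          rw [hεdef, ← ENNReal.ofReal_mul (by positivity : (0:ℝ) ≤ (n:ℝ)/2)]
          ring_nf
  -- the goal set equals Bᶜ
  have hset : {ω | (1/2 : ℝ) < (1 / n : ℝ) * ∑ i, (if cstar ∈ C i ω then (1 : ℝ) else 0)} = Bᶜ := by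
    ext ω
    simp only [Set.mem_setOf_eq, Set.mem_compl_iff, hBdef, not_le]
    have hgω : g ω = ENNReal.ofReal (∑ i, (if cstar ∈ C i ω then (0:ℝ) else 1)) := by
      rw [hgdef]
      rw [ENNReal.ofReal_sum_of_nonneg (fun i _ => by positivity)]
      refine Finset.sum_congr rfl fun i _ => ?_
      by_cases h : cstar ∈ C i ω <;>
        simp [Set.indicator, hmissdef, h]
    rw [hgω, hεdef, ENNReal.ofReal_lt_ofReal_iff (by positivity)]
    have hsum : (∑ i, (if cstar ∈ C i ω then (0:ℝ) else 1))
        + (∑ i, (if cstar ∈ C i ω then (1:ℝ) else 0)) = n := by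
      rw [← Finset.sum_add_distrib]
      have : ∀ i : Fin n, (if cstar ∈ C i ω then (0:ℝ) else 1)
          + (if cstar ∈ C i ω then (1:ℝ) else 0) = 1 := by
        intro i; by_cases h : cstar ∈ C i ω <;> simp [h]
      simp [this]
    set s := ∑ i, (if cstar ∈ C i ω then (1:ℝ) else 0) with hs
    set m := ∑ i, (if cstar ∈ C i ω then (0:ℝ) else 1) with hm
    constructor
    · intro h
      have h2 : (n:ℝ)/2 < s := by
        have := (lt_div_iff₀ hn').mp (by rwa [one_div_mul_eq_div] at h : (1:ℝ)/2 < s / n)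
        linarith
      linarith
    · intro h
      have h2 : (n:ℝ)/2 < s := by linarith
      rw [one_div_mul_eq_div, lt_div_iff₀ hn']
      linarith
  rw [hset, prob_compl_eq_one_sub hBmeas]
  calc ENNReal.ofReal (1 - 2*α) = 1 - ENNReal.ofReal (2*α) := by
        rw [← ENNReal.ofReal_one, ← ENNReal.ofReal_sub _ (by linarith : (0:ℝ) ≤ 2*α)]
    _ ≤ 1 - μ B := tsub_le_tsub_left hBle 1
end

section
/- For θ = 1/2, the majority-vote aggregated set C^{1/2} of n finite prediction sets C₁,...,Cₙ satisfies |C^{1/2}| ≤ 2·(average of the |Cᵢ|), i.e., |C^{1/2}| ≤ (2/n)·Σᵢ |Cᵢ|. -/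
open scoped Classical

/-- Majority vote (θ = 1/2) set has size at most twice the average set size. -/
theorem majority_vote_size_bound {𝒴 : Type*} [Countable 𝒴] (n : ℕ) (C : Fin n → Finset 𝒴) :
    {c : 𝒴 | (1/2 : ℝ) ≤ (1 / n : ℝ) * ∑ i, (if c ∈ C i then (1 : ℝ) else 0)}.Finite ∧
    ({c : 𝒴 | (1/2 : ℝ) ≤ (1 / n : ℝ) * ∑ i, (if c ∈ C i then (1 : ℝ) else 0)}.ncard : ℝ) ≤
      (2 / n) * ∑ i, ((C i).card : ℝ) := by
  rcases Nat.eq_zero_or_pos n with h0 | hn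
  · subst h0
    have hset : {c : 𝒴 | (1/2 : ℝ) ≤ (1 / (0:ℕ) : ℝ) * ∑ i : Fin 0, (if c ∈ C i then (1 : ℝ) else 0)} = ∅ := by
      ext c; simp
    rw [hset]
    simp
  · have hn' : (0:ℝ) < n := by exact_mod_cast hn
    set T : Finset 𝒴 := (Finset.univ.biUnion C).filter
      (fun c => ((n:ℝ)/2 ≤ ∑ i, (if c ∈ C i then (1 : ℝ) else 0))) with hT
    have hset : {c : 𝒴 | (1/2 : ℝ) ≤ (1 / n : ℝ) * ∑ i, (if c ∈ C i then (1 : ℝ) else 0)} = ↑T := by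
      ext c
      simp only [Set.mem_setOf_eq, hT, Finset.coe_filter, Finset.mem_biUnion, Finset.mem_univ,
        true_and, Set.mem_setOf_eq]
      constructor
      · intro h
        have hinv : (n:ℝ) * (1/n) = 1 := by field_simp
        have hle : (n:ℝ)/2 ≤ ∑ i, (if c ∈ C i then (1 : ℝ) else 0) := by
          nlinarith [mul_le_mul_of_nonneg_left h (le_of_lt hn')]
        refine ⟨?_, hle⟩
        by_contra hc
        push_neg at hc
        have : ∑ i, (if c ∈ C i then (1 : ℝ) else 0) = 0 := by
          apply Finset.sum_eq_zero
          intro i _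
          simp [hc i]
        rw [this] at hle
        nlinarith
      · rintro ⟨-, hle⟩
        have hinv : (n:ℝ) * (1/n) = 1 := by field_simp
        nlinarith [mul_le_mul_of_nonneg_left hle (by positivity : (0:ℝ) ≤ 1/(n:ℝ))]
    rw [hset]
    refine ⟨T.finite_toSet, ?_⟩
    rw [Set.ncard_coe_finset]
    -- key counting inequality
    have key : (T.card : ℝ) * ((n:ℝ)/2) ≤ ∑ i, ((C i).card : ℝ) := by
      have h1 : (T.card : ℝ) * ((n:ℝ)/2) ≤ ∑ c ∈ T, ∑ i, (if c ∈ C i then (1 : ℝ) else 0) := by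
        rw [Finset.card_eq_sum_ones T]
        push_cast
        rw [Finset.sum_mul]
        apply Finset.sum_le_sum
        intro c hc
        rw [hT, Finset.mem_filter] at hc
        simpa using hc.2
      have h2 : ∑ c ∈ T, ∑ i, (if c ∈ C i then (1 : ℝ) else 0)
          = ∑ i, ∑ c ∈ T, (if c ∈ C i then (1 : ℝ) else 0) := Finset.sum_comm
      have h3 : ∀ i, ∑ c ∈ T, (if c ∈ C i then (1 : ℝ) else 0) ≤ ((C i).card : ℝ) := by
        intro i
        calc ∑ c ∈ T, (if c ∈ C i then (1 : ℝ) else 0)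
            = ((T.filter (fun c => c ∈ C i)).card : ℝ) := by
              rw [Finset.sum_boole]
        _ ≤ ((C i).card : ℝ) := by
              exact_mod_cast Finset.card_le_card (by intro c hc; exact (Finset.mem_filter.mp hc).2)
      calc (T.card : ℝ) * ((n:ℝ)/2) ≤ _ := h1
      _ = _ := h2
      _ ≤ ∑ i, ((C i).card : ℝ) := Finset.sum_le_sum (fun i _ => h3 i)
    rw [div_mul_eq_mul_div, le_div_iff₀ hn']
    nlinarith [key]
end

section
/- Let π be a uniformly random permutation of {1,...,n} and C₁,...,Cₙ prediction sets each satisfying P(c* ∈ Cᵢ) ≥ 1−α. Define, for each prefix length k, the set C^π(π₁:π_k) = {c : (1/k)·Σ_{i=1}^{k} 1{c ∈ C_{π_i}} ≥ 1/2}, and let C^π = ∩_{k=1}^{n} C^π(π₁:π_k). Then P(c* ∈ C^π) ≥ 1 − 2α. -/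
/-!
Let `X j` indicate that the `j`-th permuted set misses `c*`. The law of `X` is exchangeable, and
`c* ∉ C^π` forces some prefix mean of `X` to reach `1/2`, so it suffices to prove the exchangeable
Markov inequality `t P(∃ k, S_k ≥ t k) ≤ E[X 0]` for the prefix sums `S_k` and to note that
`n E[X 0] = ∑ i, P(c* ∉ C i) ≤ n α`.

For the inequality, split the event according to the last `k ≤ n` with `S_k ≥ t k`. That event `B_k`
depends only on `S_j` for `j ≥ k`, hence is invariant under permutations of the first `k` coordinates;
by exchangeability `E[X i; B_k] = E[X 0; B_k]` for `i < k`, so `t P(B_k) ≤ E[S_k / k; B_k] = E[X 0; B_k]`.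
Summing over the disjoint `B_k` gives the claim.
-/

open MeasureTheory
open scoped Classical

open Finset
open scoped ENNReal

namespace RandomPermutationCoverage

variable {n : ℕ}

def prefixSum (x : Fin n → ℝ) (k : ℕ) : ℝ := ∑ i : Fin n with i.val < k, x i

lemma prefixSum_comp_swap (x : Fin n → ℝ) {i j : Fin n} {k : ℕ} (hi : (i : ℕ) < k)
    (hj : (j : ℕ) < k) : prefixSum (x ∘ Equiv.swap i j) k = prefixSum x k := by
  refine Equiv.Perm.sum_comp _ _ x fun a ha => ?_
  obtain ⟨-, rfl | rfl⟩ := Equiv.swap_apply_ne_self_iff.1 ha <;> simpa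

lemma prefixSum_one_sub (x : Fin n → ℝ) {k : ℕ} (hk : k ≤ n) :
    prefixSum (1 - x) k = k - prefixSum x k := by
  simp [prefixSum, sum_sub_distrib, Fin.card_filter_val_lt, min_eq_right hk]

lemma one_half_le_mean_one_sub {x : Fin n → ℝ} {k : ℕ} (hk1 : 1 ≤ k) (hkn : k ≤ n)
    (h : prefixSum x k < 1 / 2 * k) : 1 / 2 ≤ 1 / k * prefixSum (1 - x) k := by
  have hk : (0 : ℝ) < k := by exact_mod_cast hk1
  rw [prefixSum_one_sub x hkn]
  field_simp
  linarith

lemma measurable_prefixSum (k : ℕ) : Measurable fun x : Fin n → ℝ => prefixSum x k :=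
  Finset.measurable_sum _ fun i _ => measurable_pi_apply i

def lastCrossing (n : ℕ) (t : ℝ) (k : ℕ) : Set (Fin n → ℝ) :=
  {x | t * k ≤ prefixSum x k ∧ ∀ j, k < j → j ≤ n → prefixSum x j < t * j}

lemma measurableSet_lastCrossing (t : ℝ) (k : ℕ) : MeasurableSet (lastCrossing n t k) := by
  simp only [lastCrossing, Set.ofPred_and, Set.ofPred_forall]
  exact (measurableSet_le measurable_const (measurable_prefixSum k)).inter <|
    MeasurableSet.iInter fun j => MeasurableSet.iInter fun _ => MeasurableSet.iInter fun _ =>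
      measurableSet_lt (measurable_prefixSum j) measurable_const

lemma pairwiseDisjoint_lastCrossing (t : ℝ) :
    (Set.Iic n).PairwiseDisjoint (lastCrossing n t) := by
  intro k hk l hl hkl
  refine Set.disjoint_left.2 fun x hxk hxl => ?_
  rcases hkl.lt_or_gt with h | h
  · exact (hxk.2 l h hl).not_ge hxl.1
  · exact (hxl.2 k h hk).not_ge hxk.1

lemma exists_mem_lastCrossing {t : ℝ} {x : Fin n → ℝ}
    (h : ∃ k, 1 ≤ k ∧ k ≤ n ∧ t * k ≤ prefixSum x k) :
    ∃ k ∈ Icc 1 n, x ∈ lastCrossing n t k := by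
  obtain ⟨k, hk1, hkn, hk⟩ := h
  let P : ℕ → Prop := fun m => 1 ≤ m ∧ t * m ≤ prefixSum x m
  have hP : P (Nat.findGreatest P n) := Nat.findGreatest_spec hkn ⟨hk1, hk⟩
  refine ⟨_, mem_Icc.2 ⟨hP.1, Nat.findGreatest_le n⟩, hP.2, fun j hj hjn => ?_⟩
  have hj' := Nat.findGreatest_is_greatest hj hjn
  simp only [P, not_and, not_le] at hj'
  exact hj' (by omega)

lemma preimage_comp_swap_lastCrossing (t : ℝ) {i j : Fin n} {k : ℕ} (hi : (i : ℕ) < k)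
    (hj : (j : ℕ) < k) :
    (fun x => x ∘ Equiv.swap i j) ⁻¹' lastCrossing n t k = lastCrossing n t k := by
  ext x
  have h m (hm : k ≤ m) := prefixSum_comp_swap x (hi.trans_le hm) (hj.trans_le hm)
  simp only [lastCrossing, Set.mem_preimage, Set.mem_ofPred_eq]
  exact and_congr (by rw [h k le_rfl]) (forall₂_congr fun m hm => by rw [h m hm.le])

def IsExchangeable (ν : Measure (Fin n → ℝ)) : Prop :=
  ∀ σ : Equiv.Perm (Fin n), ν.map (fun x => x ∘ σ) = ν

namespace IsExchangeable

variable {ν : Measure (Fin n → ℝ)}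

lemma setLIntegral_comp_eval_eq (hν : IsExchangeable ν) {s : Set (Fin n → ℝ)}
    (hs : MeasurableSet s) {i j : Fin n}
    (hsij : (fun x => x ∘ Equiv.swap i j) ⁻¹' s = s) {g : ℝ → ℝ≥0∞} (hg : Measurable g) :
    ∫⁻ x in s, g (x i) ∂ν = ∫⁻ x in s, g (x j) ∂ν := by
  have hσ : MeasurePreserving (fun x : Fin n → ℝ => x ∘ Equiv.swap i j) ν ν :=
    ⟨by fun_prop, hν _⟩
  have := hσ.setLIntegral_comp_preimage hs (hg.comp (measurable_pi_apply i))
  rw [hsij] at this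
  simpa using this.symm

lemma lintegral_comp_eval_eq (hν : IsExchangeable ν) (i j : Fin n) {g : ℝ → ℝ≥0∞}
    (hg : Measurable g) : ∫⁻ x, g (x i) ∂ν = ∫⁻ x, g (x j) ∂ν := by
  simpa using hν.setLIntegral_comp_eval_eq MeasurableSet.univ Set.preimage_univ hg

lemma ofReal_mul_measure_lastCrossing_le [NeZero n] (hν : IsExchangeable ν) (t : ℝ) {k : ℕ}
    (hk1 : 1 ≤ k) (hkn : k ≤ n) :
    ENNReal.ofReal t * ν (lastCrossing n t k) ≤
      ∫⁻ x in lastCrossing n t k, ENNReal.ofReal (x 0) ∂ν := by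
  set B := lastCrossing n t k
  have hB : MeasurableSet B := measurableSet_lastCrossing t k
  have hcoord : ∀ i ∈ ({i | i.val < k} : Finset (Fin n)),
      ∫⁻ x in B, ENNReal.ofReal (x i) ∂ν = ∫⁻ x in B, ENNReal.ofReal (x 0) ∂ν := fun i hi =>
    hν.setLIntegral_comp_eval_eq hB
      (preimage_comp_swap_lastCrossing t (by simpa using hi) (by simp only [Fin.val_zero]; omega))
      ENNReal.measurable_ofReal
  have hk0 : (k : ℝ≥0∞) ≠ 0 := by exact_mod_cast (by omega : k ≠ 0)
  refine (ENNReal.mul_le_mul_iff_right hk0 (ENNReal.natCast_ne_top k)).1 ?_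
  calc (k : ℝ≥0∞) * (ENNReal.ofReal t * ν B)
      = ∫⁻ x in B, ENNReal.ofReal (t * k) ∂ν := by
        rw [lintegral_const, Measure.restrict_apply_univ, ENNReal.ofReal_mul' (Nat.cast_nonneg k),
          ENNReal.ofReal_natCast]
        ring
    _ ≤ ∫⁻ x in B, ENNReal.ofReal (prefixSum x k) ∂ν :=
        setLIntegral_mono' hB fun x hx => ENNReal.ofReal_le_ofReal hx.1
    _ ≤ ∫⁻ x in B, ∑ i : Fin n with i.val < k, ENNReal.ofReal (x i) ∂ν :=
        setLIntegral_mono' hB fun x _ => le_sum_of_subadditive _ ENNReal.ofReal_zero.le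
          (fun _ _ => ENNReal.ofReal_add_le) _ _
    _ = ∑ i : Fin n with i.val < k, ∫⁻ x in B, ENNReal.ofReal (x i) ∂ν :=
        lintegral_finsetSum _ fun i _ => by fun_prop
    _ = k * ∫⁻ x in B, ENNReal.ofReal (x 0) ∂ν := by
        rw [sum_congr rfl hcoord, sum_const, Fin.card_filter_val_lt, min_eq_right hkn,
          nsmul_eq_mul]

theorem ofReal_mul_measure_exists_le_prefixSum_le [NeZero n] (hν : IsExchangeable ν) (t : ℝ) :
    ENNReal.ofReal t * ν {x | ∃ k, 1 ≤ k ∧ k ≤ n ∧ t * k ≤ prefixSum x k} ≤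
      ∫⁻ x, ENNReal.ofReal (x 0) ∂ν := by
  have hdisj : (Icc 1 n : Set ℕ).PairwiseDisjoint (lastCrossing n t) :=
    (pairwiseDisjoint_lastCrossing t).subset fun k hk => (mem_Icc.1 hk).2
  have hmeas : ∀ k ∈ Icc 1 n, MeasurableSet (lastCrossing n t k) :=
    fun k _ => measurableSet_lastCrossing t k
  calc ENNReal.ofReal t * ν {x | ∃ k, 1 ≤ k ∧ k ≤ n ∧ t * k ≤ prefixSum x k}
      ≤ ENNReal.ofReal t * ν (⋃ k ∈ Icc 1 n, lastCrossing n t k) := by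
        gcongr
        intro x hx
        simpa using exists_mem_lastCrossing hx
    _ = ∑ k ∈ Icc 1 n, ENNReal.ofReal t * ν (lastCrossing n t k) := by
        rw [measure_biUnion_finset hdisj hmeas, mul_sum]
    _ ≤ ∑ k ∈ Icc 1 n, ∫⁻ x in lastCrossing n t k, ENNReal.ofReal (x 0) ∂ν :=
        sum_le_sum fun k hk =>
          hν.ofReal_mul_measure_lastCrossing_le t (mem_Icc.1 hk).1 (mem_Icc.1 hk).2
    _ = ∫⁻ x in ⋃ k ∈ Icc 1 n, lastCrossing n t k, ENNReal.ofReal (x 0) ∂ν :=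
        (lintegral_biUnion_finset hdisj hmeas _).symm
    _ ≤ ∫⁻ x, ENNReal.ofReal (x 0) ∂ν := setLIntegral_le_lintegral _ _

theorem measure_exists_le_prefixSum_le [NeZero n] (hν : IsExchangeable ν) {t : ℝ}
    (ht : 0 < t) : ν {x | ∃ k, 1 ≤ k ∧ k ≤ n ∧ t * k ≤ prefixSum x k} ≤
      (ENNReal.ofReal t)⁻¹ * ∫⁻ x, ENNReal.ofReal (x 0) ∂ν :=
  (ENNReal.mul_le_iff_le_inv (by simpa using ht) ENNReal.ofReal_ne_top).1
    (hν.ofReal_mul_measure_exists_le_prefixSum_le t)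

end IsExchangeable

variable {Ω : Type*} [MeasurableSpace Ω] {μ : Measure Ω}

lemma isExchangeable_map_iff {X : Ω → Fin n → ℝ} (hX : Measurable X) :
    IsExchangeable (μ.map X) ↔ ∀ σ : Equiv.Perm (Fin n), μ.map (fun ω => X ω ∘ σ) = μ.map X := by
  refine forall_congr' fun σ => ?_
  rw [Measure.map_map (by fun_prop) hX]
  rfl

lemma lintegral_sum_comp_perm {ι : Type*} [Fintype ι]
    {f : ι → Ω → ℝ≥0∞} (hf : ∀ i, Measurable (f i)) (π : Ω → Equiv.Perm ι) :
    ∫⁻ ω, ∑ j, f (π ω j) ω ∂μ = ∑ i, ∫⁻ ω, f i ω ∂μ := by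
  rw [← lintegral_finsetSum _ fun i _ => hf i]
  exact lintegral_congr fun ω => Equiv.sum_comp (π ω) fun i => f i ω

lemma IsExchangeable.lintegral_ofReal_eval_zero_le [NeZero n] {X : Ω → Fin n → ℝ}
    (hXm : Measurable X) (hν : IsExchangeable (μ.map X)) {A : Fin n → Set Ω}
    (hA : ∀ i, MeasurableSet (A i)) (π : Ω → Equiv.Perm (Fin n))
    (hXA : ∀ ω j, X ω j = (A (π ω j)).indicator 1 ω) {a : ℝ≥0∞} (hAa : ∀ i, μ (A i) ≤ a) :
    ∫⁻ x, ENNReal.ofReal (x 0) ∂μ.map X ≤ a := by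
  have hn : (n : ℝ≥0∞) ≠ 0 := by exact_mod_cast NeZero.ne n
  refine (ENNReal.mul_le_mul_iff_right hn (ENNReal.natCast_ne_top n)).1 ?_
  have hXA' : ∀ ω j, ENNReal.ofReal (X ω j) = (A (π ω j)).indicator 1 ω := fun ω j => by
    by_cases h : ω ∈ A (π ω j) <;> simp [hXA, h]
  calc (n : ℝ≥0∞) * ∫⁻ x, ENNReal.ofReal (x 0) ∂μ.map X
      = ∑ j, ∫⁻ x, ENNReal.ofReal (x j) ∂μ.map X := by
        simp [hν.lintegral_comp_eval_eq _ 0 ENNReal.measurable_ofReal]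
    _ = ∫⁻ ω, ∑ j, (A (π ω j)).indicator 1 ω ∂μ := by
        rw [← lintegral_finsetSum _ fun j _ => by fun_prop, lintegral_map (by fun_prop) hXm]
        simp only [hXA']
    _ = ∑ i, μ (A i) := by
        rw [lintegral_sum_comp_perm (f := fun i => (A i).indicator 1)
          (fun i => measurable_const.indicator (hA i)) π]
        exact sum_congr rfl fun i _ => lintegral_indicator_one (hA i)
    _ ≤ ∑ _i : Fin n, a := sum_le_sum fun i _ => hAa i
    _ = n * a := by simp

lemma measure_compl_le_ofReal [IsProbabilityMeasure μ] {s : Set Ω} (hs : MeasurableSet s)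
    {a : ℝ} (h : ENNReal.ofReal (1 - a) ≤ μ s) : μ sᶜ ≤ ENNReal.ofReal a := by
  rw [prob_compl_eq_one_sub hs, tsub_le_iff_right]
  calc (1 : ℝ≥0∞) = ENNReal.ofReal (a + (1 - a)) := by simp
    _ ≤ ENNReal.ofReal a + ENNReal.ofReal (1 - a) := ENNReal.ofReal_add_le
    _ ≤ ENNReal.ofReal a + μ s := by gcongr

lemma ofReal_one_sub_le_measure [IsProbabilityMeasure μ] {s t : Set Ω} (hst : sᶜ ⊆ t) {a : ℝ}
    (ha : 0 ≤ a) (hs : μ s ≤ ENNReal.ofReal a) : ENNReal.ofReal (1 - a) ≤ μ t :=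
  calc ENNReal.ofReal (1 - a) = 1 - ENNReal.ofReal a := by
        rw [ENNReal.ofReal_sub _ ha, ENNReal.ofReal_one]
    _ ≤ 1 - μ s := tsub_le_tsub_left hs 1
    _ ≤ μ sᶜ := by
        rw [tsub_le_iff_left, ← measure_univ (μ := μ)]
        exact measure_univ_le_add_compl s
    _ ≤ μ t := measure_mono hst

end RandomPermutationCoverage

open RandomPermutationCoverage

/-- Theorem 3 (first part): random permutation aggregation has coverage ≥ 1 - 2α.
`X ω k` is the indicator that the true label is missed by the `k`-th permuted set;
exchangeability of `X` encodes the assumption enabling the exchangeable Markov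
inequality. -/
theorem random_permutation_coverage {Ω : Type*} [MeasurableSpace Ω] (μ : Measure Ω)
    [IsProbabilityMeasure μ] {𝒴 : Type*} (n : ℕ) (hn : 0 < n)
    (C : Fin n → Ω → Set 𝒴) (π : Ω → Equiv.Perm (Fin n)) (cstar : 𝒴) (α : ℝ)
    (hmeas : ∀ i (c : 𝒴), MeasurableSet {ω | c ∈ C i ω})
    (hcov : ∀ i, ENNReal.ofReal (1 - α) ≤ μ {ω | cstar ∈ C i ω})
    (X : Ω → Fin n → ℝ)
    (hX : ∀ ω k, X ω k = if cstar ∈ C (π ω k) ω then 0 else 1)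
    (hmeasX : Measurable X)
    (hexch : ∀ σ : Equiv.Perm (Fin n), μ.map (fun ω => X ω ∘ σ) = μ.map X) :
    ENNReal.ofReal (1 - 2 * α) ≤
      μ {ω | ∀ k : ℕ, 1 ≤ k → k ≤ n →
        (1/2 : ℝ) ≤ (1 / k : ℝ) * ∑ i : Fin n,
          (if (i : ℕ) < k then (if cstar ∈ C (π ω i) ω then (1 : ℝ) else 0) else 0)} := by
  have : NeZero n := ⟨hn.ne'⟩
  have hα : 0 ≤ α := by linarith [ENNReal.ofReal_le_one.1 ((hcov 0).trans prob_le_one)]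
  have hν : IsExchangeable (μ.map X) := (isExchangeable_map_iff hmeasX).2 hexch
  have hmiss : ∫⁻ x, ENNReal.ofReal (x 0) ∂μ.map X ≤ ENNReal.ofReal α :=
    hν.lintegral_ofReal_eval_zero_le hmeasX (fun i => (hmeas i cstar).compl) π
      (fun ω j => by by_cases h : cstar ∈ C (π ω j) ω <;> simp [hX, h])
      fun i => measure_compl_le_ofReal (hmeas i cstar) (hcov i)
  set bad := {x : Fin n → ℝ | ∃ k, 1 ≤ k ∧ k ≤ n ∧ 1 / 2 * k ≤ prefixSum x k}
  have hbad : μ (X ⁻¹' bad) ≤ ENNReal.ofReal (2 * α) :=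
    calc μ (X ⁻¹' bad) ≤ μ.map X bad := Measure.le_map_apply hmeasX.aemeasurable _
      _ ≤ (ENNReal.ofReal (1 / 2))⁻¹ * ∫⁻ x, ENNReal.ofReal (x 0) ∂μ.map X :=
          hν.measure_exists_le_prefixSum_le (by norm_num)
      _ ≤ ENNReal.ofReal (2 * α) := by
          rw [ENNReal.ofReal_mul zero_le_two]
          simpa using mul_le_mul_right hmiss 2
  refine ofReal_one_sub_le_measure (fun ω hω k hk1 hkn => ?_) (by positivity) hbad
  have hsum : ∑ i : Fin n,
      (if (i : ℕ) < k then (if cstar ∈ C (π ω i) ω then (1 : ℝ) else 0) else 0) =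
        prefixSum (1 - X ω) k := by
    rw [prefixSum, sum_filter]
    refine sum_congr rfl fun i _ => ?_
    simp only [hX, Pi.sub_apply, Pi.one_apply]
    split_ifs <;> norm_num
  rw [hsum]
  exact one_half_le_mean_one_sub hk1 hkn (not_le.1 fun h => hω ⟨k, hk1, hkn, h⟩)
end

section
/- (Exchangeable Markov inequality, as used in Theorem 3.) Let X₁, ..., Xₙ be exchangeable nonnegative random variables with E[Xᵢ] ≤ μ. Then for any t > 0, P(∃ k ∈ {1,...,n} : (1/k)·Σ_{i=1}^{k} Xᵢ ≥ t) ≤ μ/t. -/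
/-!
Split the event according to the last index `k ≤ n` at which the prefix average reaches `t`.
That event `A_k` only depends on the prefix sums of length `≥ k`, which are invariant under
permutations of the first `k` coordinates; by exchangeability `X₁, …, X_k` therefore have the
same integral over `A_k`. Markov's inequality for the prefix sum of length `k` then gives
`t · P(A_k) ≤ E[X₁; A_k]`, and summing over the disjoint events `A_k` gives
`t · P(⋃ A_k) ≤ E[X₁]`.
-/

open MeasureTheory
open scoped ENNReal

namespace ExchangeableMarkov

variable {n : ℕ}

def Exchangeable {ι β : Type*} [MeasurableSpace β] (ν : Measure (ι → β)) : Prop :=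
  ∀ σ : Equiv.Perm ι, ν.map (fun x i => x (σ i)) = ν

lemma exchangeable_map {ι β Ω : Type*} [MeasurableSpace β] [MeasurableSpace Ω]
    {μ : Measure Ω} {V : Ω → ι → β} (hV : AEMeasurable V μ)
    (h : ∀ σ : Equiv.Perm ι, μ.map (fun ω i => V ω (σ i)) = μ.map V) :
    Exchangeable (μ.map V) := fun σ => by
  have hσ : Measurable fun (x : ι → β) i => x (σ i) := by fun_prop
  rw [AEMeasurable.map_map_of_aemeasurable hσ.aemeasurable hV]
  exact h σ

noncomputable def prefixSum (k : ℕ) (x : Fin n → ℝ) : ℝ :=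
  ∑ i : Fin n with i.val < k, x i

def prefixAvgGe (t : ℝ) (k : ℕ) : Set (Fin n → ℝ) :=
  {x | t ≤ (1 / k : ℝ) * prefixSum k x}

def lastPrefixAvgGe (t : ℝ) (k : ℕ) : Set (Fin n → ℝ) :=
  prefixAvgGe t k ∩ ⋂ j ∈ Finset.Ioc k n, (prefixAvgGe t j)ᶜ

@[fun_prop]
lemma measurable_prefixSum (k : ℕ) : Measurable (prefixSum (n := n) k) := by
  unfold prefixSum
  fun_prop

lemma measurableSet_prefixAvgGe (t : ℝ) (k : ℕ) : MeasurableSet (prefixAvgGe (n := n) t k) :=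
  measurableSet_le measurable_const (by fun_prop)

lemma measurableSet_lastPrefixAvgGe (t : ℝ) (k : ℕ) :
    MeasurableSet (lastPrefixAvgGe (n := n) t k) :=
  (measurableSet_prefixAvgGe t k).inter <|
    Finset.measurableSet_biInter _ fun j _ => (measurableSet_prefixAvgGe t j).compl

lemma setOf_exists_prefixAvgGe_eq_biUnion (t : ℝ) :
    {x : Fin n → ℝ | ∃ k, 1 ≤ k ∧ k ≤ n ∧ x ∈ prefixAvgGe t k} =
      ⋃ k ∈ Finset.Icc 1 n, lastPrefixAvgGe t k := by
  ext x
  simp only [Set.mem_ofPred_eq, Set.mem_iUnion, Finset.mem_Icc, exists_prop]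
  constructor
  · rintro ⟨k, hk1, hkn, hk⟩
    classical
    set s := {j ∈ Finset.Icc 1 n | x ∈ prefixAvgGe t j}
    have hs : s.Nonempty := ⟨k, by simp [s, hk1, hkn, hk]⟩
    obtain ⟨hmax_Icc, hmax_ge⟩ := Finset.mem_filter.1 (s.max'_mem hs)
    obtain ⟨hmax1, -⟩ := Finset.mem_Icc.1 hmax_Icc
    refine ⟨s.max' hs, Finset.mem_Icc.1 hmax_Icc, hmax_ge,
      Set.mem_iInter₂.2 fun j hj hx => ?_⟩
    obtain ⟨hlt, hjn⟩ := Finset.mem_Ioc.1 hj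
    have hjs : j ∈ s := Finset.mem_filter.2 ⟨Finset.mem_Icc.2 ⟨by omega, hjn⟩, hx⟩
    exact (s.le_max' j hjs).not_gt hlt
  · rintro ⟨k, ⟨hk1, hkn⟩, hx, -⟩
    exact ⟨k, hk1, hkn, hx⟩

lemma measurableSet_setOf_exists_prefixAvgGe (t : ℝ) :
    MeasurableSet {x : Fin n → ℝ | ∃ k, 1 ≤ k ∧ k ≤ n ∧ x ∈ prefixAvgGe t k} := by
  rw [setOf_exists_prefixAvgGe_eq_biUnion]
  exact Finset.measurableSet_biUnion _ fun k _ => measurableSet_lastPrefixAvgGe t k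

lemma pairwiseDisjoint_lastPrefixAvgGe (t : ℝ) :
    (Finset.Icc 1 n : Set ℕ).PairwiseDisjoint (lastPrefixAvgGe (n := n) t) := by
  suffices h : ∀ k l, k < l → l ≤ n →
      Disjoint (lastPrefixAvgGe (n := n) t k) (lastPrefixAvgGe t l) by
    intro k hk l hl hkl
    simp only [Finset.coe_Icc, Set.mem_Icc] at hk hl
    rcases hkl.lt_or_gt with hlt | hlt
    · exact h k l hlt hl.2
    · exact (h l k hlt hk.2).symm
  intro k l hkl hln
  refine Set.disjoint_left.2 fun x hk hl => ?_
  exact Set.mem_iInter₂.1 hk.2 l (Finset.mem_Ioc.2 ⟨hkl, hln⟩) hl.1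

lemma prefixSum_comp_perm {k j : ℕ} {σ : Equiv.Perm (Fin n)}
    (hσ : ∀ i : Fin n, k ≤ (i : ℕ) → σ i = i) (hkj : k ≤ j) (x : Fin n → ℝ) :
    prefixSum j (fun i => x (σ i)) = prefixSum j x :=
  Equiv.Perm.sum_comp σ _ x fun i hi => by
    have := mt (hσ i) hi
    simp only [Finset.coe_filter, Finset.mem_univ, true_and, Set.mem_ofPred_eq]
    omega

lemma comp_perm_preimage_lastPrefixAvgGe {k : ℕ} {σ : Equiv.Perm (Fin n)}
    (hσ : ∀ i : Fin n, k ≤ (i : ℕ) → σ i = i) (t : ℝ) :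
    (fun (x : Fin n → ℝ) i => x (σ i)) ⁻¹' lastPrefixAvgGe t k = lastPrefixAvgGe t k := by
  have h : ∀ j, k ≤ j → ∀ x : Fin n → ℝ,
      (fun i => x (σ i)) ∈ prefixAvgGe t j ↔ x ∈ prefixAvgGe t j :=
    fun j hj x => by simp only [prefixAvgGe, Set.mem_ofPred_eq, prefixSum_comp_perm hσ hj]
  ext x
  simp only [lastPrefixAvgGe, Set.mem_preimage, Set.mem_inter_iff, Set.mem_iInter,
    Set.mem_compl_iff, Finset.mem_Ioc]
  rw [h k le_rfl]
  exact and_congr_right' <| forall_congr' fun j => forall_congr' fun hj => not_congr (h j hj.1.le x)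

lemma setLIntegral_lastPrefixAvgGe_ofReal_apply_eq {ν : Measure (Fin n → ℝ)}
    (hν : Exchangeable ν) (t : ℝ) {k : ℕ} {i i₀ : Fin n} (hi : (i : ℕ) < k)
    (hi₀ : (i₀ : ℕ) < k) :
    ∫⁻ x in lastPrefixAvgGe t k, ENNReal.ofReal (x i) ∂ν =
      ∫⁻ x in lastPrefixAvgGe t k, ENNReal.ofReal (x i₀) ∂ν := by
  set σ := Equiv.swap i₀ i
  have hσ : ∀ j : Fin n, k ≤ (j : ℕ) → σ j = j := fun j hj =>
    Equiv.swap_apply_of_ne_of_ne (Fin.ne_of_val_ne (by omega)) (Fin.ne_of_val_ne (by omega))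
  set permute : (Fin n → ℝ) → Fin n → ℝ := fun x j => x (σ j)
  have hmp : MeasurePreserving permute ν ν := ⟨by fun_prop, hν σ⟩
  calc ∫⁻ x in lastPrefixAvgGe t k, ENNReal.ofReal (x i) ∂ν
      = ∫⁻ x in permute ⁻¹' lastPrefixAvgGe t k, ENNReal.ofReal (permute x i₀) ∂ν := by
        rw [comp_perm_preimage_lastPrefixAvgGe hσ]
        simp only [permute, σ, Equiv.swap_apply_left]
    _ = ∫⁻ x in lastPrefixAvgGe t k, ENNReal.ofReal (x i₀) ∂ν :=
        hmp.setLIntegral_comp_preimage (measurableSet_lastPrefixAvgGe t k)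
          (f := fun x => ENNReal.ofReal (x i₀)) (by fun_prop)

lemma ofReal_mul_measure_lastPrefixAvgGe_le {ν : Measure (Fin n → ℝ)} (hν : Exchangeable ν)
    (t : ℝ) {k : ℕ} (hkn : k ≤ n) {i₀ : Fin n} (hi₀ : (i₀ : ℕ) < k) :
    ENNReal.ofReal t * ν (lastPrefixAvgGe t k) ≤
      ∫⁻ x in lastPrefixAvgGe t k, ENNReal.ofReal (x i₀) ∂ν := by
  set A := lastPrefixAvgGe (n := n) t k
  have hk : (k : ℝ≥0∞) ≠ 0 := Nat.cast_ne_zero.2 (by omega)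
  refine (ENNReal.mul_le_mul_iff_right hk (ENNReal.natCast_ne_top k)).1 ?_
  calc (k : ℝ≥0∞) * (ENNReal.ofReal t * ν A)
      = ∫⁻ _ in A, ENNReal.ofReal (k * t) ∂ν := by
        rw [setLIntegral_const, ENNReal.ofReal_mul (Nat.cast_nonneg k), ENNReal.ofReal_natCast,
          mul_assoc]
    _ ≤ ∫⁻ x in A, ENNReal.ofReal (prefixSum k x) ∂ν := by
        refine setLIntegral_mono (by fun_prop) fun x hx => ENNReal.ofReal_le_ofReal ?_
        have hk' : (0 : ℝ) < k := by exact_mod_cast (by omega : 0 < k)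
        calc (k : ℝ) * t ≤ k * ((1 / k : ℝ) * prefixSum k x) := by gcongr; exact hx.1
          _ = prefixSum k x := by field_simp
    _ ≤ ∫⁻ x in A, ∑ i : Fin n with i.val < k, ENNReal.ofReal (x i) ∂ν :=
        lintegral_mono fun x => Finset.le_sum_of_subadditive _ ENNReal.ofReal_zero.le
          (fun _ _ => ENNReal.ofReal_add_le) _ _
    _ = ∑ i : Fin n with i.val < k, ∫⁻ x in A, ENNReal.ofReal (x i) ∂ν :=
        lintegral_finsetSum _ fun i _ => by fun_prop
    _ = k * ∫⁻ x in A, ENNReal.ofReal (x i₀) ∂ν := by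
        rw [Finset.sum_congr rfl fun i hi =>
            setLIntegral_lastPrefixAvgGe_ofReal_apply_eq hν t (Finset.mem_filter.1 hi).2 hi₀,
          Finset.sum_const, Fin.card_filter_val_lt, min_eq_right hkn, nsmul_eq_mul]

lemma ofReal_mul_measure_exists_prefixAvgGe_le [NeZero n] {ν : Measure (Fin n → ℝ)}
    (hν : Exchangeable ν) (t : ℝ) :
    ENNReal.ofReal t * ν {x | ∃ k, 1 ≤ k ∧ k ≤ n ∧ x ∈ prefixAvgGe t k} ≤
      ∫⁻ x, ENNReal.ofReal (x 0) ∂ν := by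
  rw [setOf_exists_prefixAvgGe_eq_biUnion, measure_biUnion_finset
    (pairwiseDisjoint_lastPrefixAvgGe t) fun k _ => measurableSet_lastPrefixAvgGe t k,
    Finset.mul_sum]
  calc ∑ k ∈ Finset.Icc 1 n, ENNReal.ofReal t * ν (lastPrefixAvgGe t k)
      ≤ ∑ k ∈ Finset.Icc 1 n, ∫⁻ x in lastPrefixAvgGe t k, ENNReal.ofReal (x 0) ∂ν :=
        Finset.sum_le_sum fun k hk => by
          obtain ⟨hk1, hkn⟩ := Finset.mem_Icc.1 hk
          exact ofReal_mul_measure_lastPrefixAvgGe_le hν t hkn (by rw [Fin.val_zero]; omega)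
    _ = ∫⁻ x in ⋃ k ∈ Finset.Icc 1 n, lastPrefixAvgGe t k, ENNReal.ofReal (x 0) ∂ν :=
        (lintegral_biUnion_finset (pairwiseDisjoint_lastPrefixAvgGe t)
          (fun k _ => measurableSet_lastPrefixAvgGe t k) _).symm
    _ ≤ ∫⁻ x, ENNReal.ofReal (x 0) ∂ν := setLIntegral_le_lintegral _ _

end ExchangeableMarkov

open ExchangeableMarkov in
theorem exchangeable_markov_inequality_general {Ω : Type*} [MeasurableSpace Ω] (μ : Measure Ω)
    (n : ℕ) (X : Fin n → Ω → ℝ)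
    (hint : ∀ i, Integrable (X i) μ)
    (hnonneg : ∀ i ω, 0 ≤ X i ω)
    (hexch : ∀ σ : Equiv.Perm (Fin n),
      μ.map (fun ω => fun i => X (σ i) ω) = μ.map (fun ω => fun i => X i ω))
    (m : ℝ) (hm : ∀ i, ∫ ω, X i ω ∂μ ≤ m)
    (t : ℝ) (ht : 0 < t) :
    μ {ω | ∃ k : ℕ, 1 ≤ k ∧ k ≤ n ∧
        t ≤ (1 / k : ℝ) * ∑ i : Fin n, (if (i : ℕ) < k then X i ω else 0)} ≤
      ENNReal.ofReal (m / t) := by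
  rcases n.eq_zero_or_pos with rfl | hn
  · simp
  have : NeZero n := ⟨hn.ne'⟩
  set V : Ω → Fin n → ℝ := fun ω i => X i ω
  have hV : AEMeasurable V μ := aemeasurable_pi_lambda _ fun i => (hint i).aemeasurable
  have hevent : {ω | ∃ k : ℕ, 1 ≤ k ∧ k ≤ n ∧
      t ≤ (1 / k : ℝ) * ∑ i : Fin n, (if (i : ℕ) < k then X i ω else 0)} =
      V ⁻¹' {x | ∃ k, 1 ≤ k ∧ k ≤ n ∧ x ∈ prefixAvgGe t k} := by
    ext ω
    simp [V, prefixAvgGe, prefixSum, Finset.sum_filter]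
  have hmean : ∫⁻ x, ENNReal.ofReal (x 0) ∂μ.map V ≤ ENNReal.ofReal m := by
    have h0 : Measurable fun x : Fin n → ℝ => ENNReal.ofReal (x 0) := by fun_prop
    rw [lintegral_map' h0.aemeasurable hV,
      ← ofReal_integral_eq_lintegral_ofReal (hint 0) (ae_of_all _ (hnonneg 0))]
    exact ENNReal.ofReal_le_ofReal (hm 0)
  rw [hevent, ← Measure.map_apply_of_aemeasurable hV (measurableSet_setOf_exists_prefixAvgGe t),
    ENNReal.ofReal_div_of_pos ht, ENNReal.le_div_iff_mul_le (Or.inl (by simpa using ht)) (by simp),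
    mul_comm]
  exact (ofReal_mul_measure_exists_prefixAvgGe_le (exchangeable_map hV hexch) t).trans hmean

/-- Exchangeable Markov inequality: for exchangeable nonnegative random variables with
mean ≤ m, the probability that some prefix average reaches t is at most m/t. -/
theorem exchangeable_markov_inequality {Ω : Type*} [MeasurableSpace Ω] (μ : Measure Ω)
    [IsProbabilityMeasure μ] (n : ℕ) (X : Fin n → Ω → ℝ)
    (hmeas : ∀ i, Measurable (X i)) (hint : ∀ i, Integrable (X i) μ)
    (hnonneg : ∀ i ω, 0 ≤ X i ω)
    (hexch : ∀ σ : Equiv.Perm (Fin n),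
      μ.map (fun ω => fun i => X (σ i) ω) = μ.map (fun ω => fun i => X i ω))
    (m : ℝ) (hm : ∀ i, ∫ ω, X i ω ∂μ ≤ m)
    (t : ℝ) (ht : 0 < t) :
    μ {ω | ∃ k : ℕ, 1 ≤ k ∧ k ≤ n ∧
        t ≤ (1 / k : ℝ) * ∑ i : Fin n, (if (i : ℕ) < k then X i ω else 0)} ≤
      ENNReal.ofReal (m / t) :=
  exchangeable_markov_inequality_general μ n X hint hnonneg hexch m hm t ht
end

section
/- Suppose Bernoulli random variables φ₁,...,φₙ are obtained by applying a uniformly random permutation π to fixed {0,1} values (i.e., φ_k = b_{π_k} for a fixed binary vector b with Σb_i/n ≤ α). Then the sequence φ₁,...,φₙ is exchangeable, and P(∃ k : (1/k)·Σ_{i=1}^{k} φᵢ ≥ 1/2) ≤ 2α. -/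
/-!
Cyclic rotation `σ ↦ σ * finRotate n` of the permutation turns the prefix averages of
`(b (σ i))ᵢ` into Birkhoff averages of `τ ↦ b (τ 0)` along a bijection of the finite set of
permutations. Hopf's maximal ergodic lemma, in its finite form, then bounds the number of
permutations on which some such average reaches `1/2` by `2 ∑ τ, b (τ 0) = 2 n! · mean b`.
Exchangeability is the invariance of the uniform law of `π` under right multiplication.
-/

open MeasureTheory Finset
open scoped Classical ENNReal

theorem sum_nonneg_of_exists_birkhoffSum_nonneg {α : Type*} [Fintype α] (T : α ≃ α)
    (x : α → ℝ) (N : ℕ) :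
    0 ≤ ∑ a with ∃ k ∈ Icc 1 N, 0 ≤ birkhoffSum T x k a, x a := by
  set E : Finset α := {a | ∃ k ∈ Icc 1 N, 0 ≤ birkhoffSum T x k a}
  -- the running maximum of the Birkhoff sums, the empty sum included
  set M : α → ℝ := fun a => (range (N + 1)).sup' nonempty_range_add_one
    fun k => birkhoffSum T x k a
  have hM_nonneg : ∀ a, 0 ≤ M a := fun a =>
    le_sup'_of_le _ (mem_range.2 N.succ_pos) (birkhoffSum_zero _ _ _).ge
  have hM_succ : ∀ a, ∀ k < N, birkhoffSum T x (k + 1) a ≤ x a + M (T a) := fun a k hk => by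
    rw [birkhoffSum_succ']
    gcongr
    exact le_sup' (fun k => birkhoffSum T x k (T a)) (mem_range.2 (by omega))
  have hM_of_mem : ∀ a ∈ E, M a ≤ x a + M (T a) := by
    intro a ha
    obtain ⟨k₀, hk₀, hS₀⟩ : ∃ k ∈ Icc 1 N, 0 ≤ birkhoffSum T x k a := by simpa [E] using ha
    obtain ⟨h1, hN⟩ := mem_Icc.1 hk₀
    refine sup'_le _ _ fun k hk => ?_
    rcases k with _ | k
    · obtain ⟨j, rfl⟩ := Nat.exists_eq_add_of_le' h1
      exact (birkhoffSum_zero _ _ _).trans_le (hS₀.trans (hM_succ a j (by omega)))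
    · exact hM_succ a k (by simpa using hk)
  have hM_of_not_mem : ∀ a ∉ E, M a = 0 := by
    intro a ha
    refine le_antisymm (sup'_le _ _ fun k hk => ?_) (hM_nonneg a)
    rcases k with _ | k
    · exact (birkhoffSum_zero _ _ _).le
    · simp only [E, mem_filter, mem_univ, true_and, not_exists, not_and, not_le] at ha
      exact (ha (k + 1) (mem_Icc.2 ⟨by omega, by simpa using hk⟩)).le
  calc (0 : ℝ) = ∑ a, M a - ∑ a, M (T a) := by rw [Equiv.sum_comp, sub_self]
    _ ≤ ∑ a ∈ E, M a - ∑ a ∈ E, M (T a) := by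
      rw [sum_subset (subset_univ E) fun a _ ha => hM_of_not_mem a ha]
      exact sub_le_sub_left (sum_le_univ_sum_of_nonneg fun a => hM_nonneg (T a)) _
    _ ≤ ∑ a ∈ E, x a := by
      rw [← sum_sub_distrib]
      exact sum_le_sum fun a ha => by linarith [hM_of_mem a ha]

theorem mul_card_exists_le_birkhoffAverage_le_sum {α : Type*} [Fintype α] (T : α ≃ α)
    {g : α → ℝ} (hg : 0 ≤ g) (c : ℝ) (N : ℕ) :
    c * #{a | ∃ k ∈ Icc 1 N, c ≤ birkhoffAverage ℝ T g k a} ≤ ∑ a, g a := by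
  have hx := sum_nonneg_of_exists_birkhoffSum_nonneg T (fun a => g a - c) N
  have hS : ∀ k a, birkhoffSum T (fun a => g a - c) k a = birkhoffSum T g k a - k * c := by
    intro k a
    rw [show (fun a => g a - c) = g - fun _ => c from rfl, birkhoffSum_sub]
    simp [birkhoffSum]
  set E : Finset α := {a | ∃ k ∈ Icc 1 N, c ≤ birkhoffAverage ℝ T g k a}
  have hE : ({a | ∃ k ∈ Icc 1 N, 0 ≤ birkhoffSum T (fun a => g a - c) k a} : Finset α) = E := by
    ext a
    simp only [E, mem_filter, mem_univ, true_and]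
    refine exists_congr fun k => and_congr_right fun hk => ?_
    have hk : (0 : ℝ) < k := by exact_mod_cast (mem_Icc.1 hk).1
    rw [hS, sub_nonneg, birkhoffAverage, smul_eq_mul, le_inv_mul_iff₀ hk, mul_comm]
  rw [hE, sum_sub_distrib, sum_const, nsmul_eq_mul, sub_nonneg] at hx
  calc c * #E ≤ ∑ a ∈ E, g a := by linarith
    _ ≤ ∑ a, g a := sum_le_univ_sum_of_nonneg hg

theorem coe_finRotate_pow_apply {n : ℕ} (i : Fin n) (j : ℕ) :
    ((finRotate n ^ j) i : ℕ) = (i + j) % n := by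
  induction j with
  | zero => simp [Nat.mod_eq_of_lt i.isLt]
  | succ j ih =>
    have := i.neZero
    rw [pow_succ', Equiv.Perm.mul_apply, finRotate_apply, Fin.val_add, ih, Fin.val_one',
      ← Nat.add_mod, ← add_assoc]

theorem birkhoffSum_mulRight_finRotate {M : Type*} [AddCommMonoid M] {n k : ℕ} [NeZero n]
    (hk : k ≤ n) (f : Fin n → M) (σ : Equiv.Perm (Fin n)) :
    birkhoffSum (Equiv.mulRight (finRotate n)) (fun τ => f (τ 0)) k σ =
      ∑ i : Fin n, if (i : ℕ) < k then f (σ i) else 0 := by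
  rw [birkhoffSum, Equiv.coe_mulRight, ← sum_filter]
  simp only [mul_right_iterate_apply, Equiv.Perm.mul_apply]
  have hmod : ∀ j ∈ range k, j % n = j := fun j hj => Nat.mod_eq_of_lt ((mem_range.1 hj).trans_le hk)
  refine sum_bij' (fun j _ => (finRotate n ^ j) 0) (fun i _ => i) ?_ ?_ ?_ ?_ fun _ _ => rfl
  · intro j hj
    simpa [coe_finRotate_pow_apply, hmod j hj] using hj
  · intro i hi
    simpa using hi
  · intro j hj
    simp [coe_finRotate_pow_apply, hmod j hj]
  · intro i _
    ext
    simp [coe_finRotate_pow_apply, Nat.mod_eq_of_lt i.isLt]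

theorem card_nsmul_sum_perm_apply {α M : Type*} [Fintype α] [DecidableEq α] [AddCommMonoid M]
    (f : α → M) (a : α) :
    Fintype.card α • ∑ σ : Equiv.Perm α, f (σ a) = (Fintype.card α).factorial • ∑ i, f i := by
  have h : ∀ i, ∑ σ : Equiv.Perm α, f (σ i) = ∑ σ : Equiv.Perm α, f (σ a) := fun i =>
    Fintype.sum_equiv (Equiv.mulRight (Equiv.swap i a)) _ _ fun σ => by simp
  calc Fintype.card α • ∑ σ : Equiv.Perm α, f (σ a) = ∑ i, ∑ σ : Equiv.Perm α, f (σ i) := by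
        simp [h]
    _ = ∑ σ : Equiv.Perm α, ∑ i, f (σ i) := sum_comm
    _ = (Fintype.card α).factorial • ∑ i, f i := by simp [Equiv.sum_comp, Fintype.card_perm]

theorem mul_card_exists_le_prefix_average_le_sum {n : ℕ} [NeZero n] {b : Fin n → ℝ}
    (hb : 0 ≤ b) (c : ℝ) :
    c * n * #{σ : Equiv.Perm (Fin n) | ∃ k ∈ Icc 1 n,
      c ≤ (1 / k : ℝ) * ∑ i : Fin n, if (i : ℕ) < k then b (σ i) else 0} ≤
      n.factorial * ∑ i, b i := by
  set T := Equiv.mulRight (finRotate n)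
  have hB : ({σ | ∃ k ∈ Icc 1 n,
      c ≤ (1 / k : ℝ) * ∑ i : Fin n, if (i : ℕ) < k then b (σ i) else 0} :
      Finset (Equiv.Perm (Fin n))) =
      ({σ | ∃ k ∈ Icc 1 n, c ≤ birkhoffAverage ℝ T (fun τ => b (τ 0)) k σ} : Finset _) := by
    ext σ
    simp only [mem_filter, mem_univ, true_and]
    refine exists_congr fun k => and_congr_right fun hk => ?_
    rw [birkhoffAverage, birkhoffSum_mulRight_finRotate (mem_Icc.1 hk).2, smul_eq_mul,
      one_div (k : ℝ)]
  rw [hB, mul_comm c, mul_assoc]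
  calc (n : ℝ) * (c * #{σ | ∃ k ∈ Icc 1 n, c ≤ birkhoffAverage ℝ T (fun τ => b (τ 0)) k σ})
      ≤ n * ∑ τ : Equiv.Perm (Fin n), b (τ 0) := by
        gcongr
        exact mul_card_exists_le_birkhoffAverage_le_sum T (fun τ => hb (τ 0)) c n
    _ = n.factorial * ∑ i, b i := by simpa using card_nsmul_sum_perm_apply b 0

section UniformFibers

variable {Ω α : Type*} [MeasurableSpace Ω] {π : Ω → α}

theorem measurable_comp_of_measurableSet_fiber [Countable α]
    (hmeas : ∀ a, MeasurableSet {ω | π ω = a}) {β : Type*} [MeasurableSpace β] (g : α → β) :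
    Measurable fun ω => g (π ω) := fun s _ => by
  have hpre : (fun ω => g (π ω)) ⁻¹' s = ⋃ a ∈ g ⁻¹' s, {ω | π ω = a} := by ext; simp
  rw [hpre]
  exact .biUnion (Set.to_countable _) fun a _ => hmeas a

variable {μ : Measure Ω} {c : ℝ≥0∞}

theorem measure_mem_finset_of_fiber_eq (hmeas : ∀ a, MeasurableSet {ω | π ω = a})
    (hunif : ∀ a, μ {ω | π ω = a} = c) (P : Finset α) : μ {ω | π ω ∈ P} = #P * c := by
  have hpre : {ω | π ω ∈ P} = ⋃ a ∈ P, {ω | π ω = a} := by ext; simp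
  rw [hpre, measure_biUnion_finset (fun a _ b _ hab => ?_) fun a _ => hmeas a]
  · simp [hunif]
  · exact Set.disjoint_left.2 fun ω (ha : π ω = a) (hb : π ω = b) => hab (ha ▸ hb)

theorem map_comp_equiv_of_fiber_eq [Fintype α] (hmeas : ∀ a, MeasurableSet {ω | π ω = a})
    (hunif : ∀ a, μ {ω | π ω = a} = c) {β : Type*} [MeasurableSpace β] (g : α → β) (e : α ≃ α) :
    μ.map (fun ω => g (e (π ω))) = μ.map (fun ω => g (π ω)) := by
  ext s hs
  rw [Measure.map_apply (measurable_comp_of_measurableSet_fiber hmeas fun a => g (e a)) hs,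
    Measure.map_apply (measurable_comp_of_measurableSet_fiber hmeas _) hs]
  have hpre : ∀ f : α → β, (fun ω => f (π ω)) ⁻¹' s = {ω | π ω ∈ ({a | f a ∈ s} : Finset α)} := by
    intro f; ext; simp
  rw [hpre fun a => g (e a), hpre g, measure_mem_finset_of_fiber_eq hmeas hunif,
    measure_mem_finset_of_fiber_eq hmeas hunif]
  exact congrArg (· * c) (congrArg _ (card_equiv e fun a => by simp))

end UniformFibers

theorem permuted_bernoulli_exchangeable_general {Ω : Type*} [MeasurableSpace Ω] (μ : Measure Ω)
    (n : ℕ) (hn : 0 < n)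
    (b : Fin n → ℝ) (hb : ∀ i, b i = 0 ∨ b i = 1)
    (α : ℝ) (hα : (1 / n : ℝ) * ∑ i, b i ≤ α)
    (π : Ω → Equiv.Perm (Fin n))
    (hmeas : ∀ σ, MeasurableSet {ω | π ω = σ})
    (hunif : ∀ σ, μ {ω | π ω = σ} = ((n.factorial : ℝ≥0∞))⁻¹) :
    (∀ σ : Equiv.Perm (Fin n),
      μ.map (fun ω => fun k => b (π ω (σ k))) = μ.map (fun ω => fun k => b (π ω k))) ∧
    μ {ω | ∃ k : ℕ, 1 ≤ k ∧ k ≤ n ∧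
        (1/2 : ℝ) ≤ (1 / k : ℝ) * ∑ i : Fin n, (if (i : ℕ) < k then b (π ω i) else 0)} ≤
      ENNReal.ofReal (2 * α) := by
  refine ⟨fun σ => map_comp_equiv_of_fiber_eq hmeas hunif (fun τ k => b (τ k)) (.mulRight σ), ?_⟩
  have : NeZero n := ⟨hn.ne'⟩
  set B : Finset (Equiv.Perm (Fin n)) := {σ | ∃ k ∈ Icc 1 n,
    1 / 2 ≤ (1 / k : ℝ) * ∑ i : Fin n, if (i : ℕ) < k then b (σ i) else 0}
  have hB : 1 / 2 * n * #B ≤ n.factorial * ∑ i, b i :=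
    mul_card_exists_le_prefix_average_le_sum (fun i => by rcases hb i with h | h <;> simp [h]) _
  have hevent : {ω | ∃ k : ℕ, 1 ≤ k ∧ k ≤ n ∧
      (1/2 : ℝ) ≤ (1 / k : ℝ) * ∑ i : Fin n, (if (i : ℕ) < k then b (π ω i) else 0)} =
      {ω | π ω ∈ B} := by
    ext ω
    simp [B, and_assoc]
  have hn' : (0 : ℝ) < n := by exact_mod_cast hn
  have hfac : (0 : ℝ) < n.factorial := by exact_mod_cast n.factorial_pos
  have hα' : ∑ i, b i ≤ n * α := by rwa [one_div, inv_mul_le_iff₀ hn'] at hα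
  have hprob : (#B : ℝ) / n.factorial ≤ 2 * α := by
    rw [div_le_iff₀ hfac]
    nlinarith
  rw [hevent, measure_mem_finset_of_fiber_eq hmeas hunif, ← div_eq_mul_inv,
    ← ENNReal.ofReal_natCast, ← ENNReal.ofReal_natCast, ← ENNReal.ofReal_div_of_pos hfac]
  exact ENNReal.ofReal_le_ofReal hprob

/-- Bernoulli variables obtained by a uniformly random permutation of a fixed binary
vector with empirical mean ≤ α are exchangeable, and the probability that some prefix
average reaches 1/2 is at most 2α. -/
theorem permuted_bernoulli_exchangeable {Ω : Type*} [MeasurableSpace Ω] (μ : Measure Ω)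
    [IsProbabilityMeasure μ] (n : ℕ) (hn : 0 < n)
    (b : Fin n → ℝ) (hb : ∀ i, b i = 0 ∨ b i = 1)
    (α : ℝ) (hα : (1 / n : ℝ) * ∑ i, b i ≤ α)
    (π : Ω → Equiv.Perm (Fin n))
    (hmeas : ∀ σ, MeasurableSet {ω | π ω = σ})
    (hunif : ∀ σ, μ {ω | π ω = σ} = ((n.factorial : ℝ≥0∞))⁻¹) :
    (∀ σ : Equiv.Perm (Fin n),
      μ.map (fun ω => fun k => b (π ω (σ k))) = μ.map (fun ω => fun k => b (π ω k))) ∧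
    μ {ω | ∃ k : ℕ, 1 ≤ k ∧ k ≤ n ∧
        (1/2 : ℝ) ≤ (1 / k : ℝ) * ∑ i : Fin n, (if (i : ℕ) < k then b (π ω i) else 0)} ≤
      ENNReal.ofReal (2 * α) :=
  permuted_bernoulli_exchangeable_general μ n hn b hb α hα π hmeas hunif
end

section
/- Let C₁,...,Cₙ each satisfy P(c* ∈ Cᵢ) ≥ 1−αᵢ with possibly different error levels αᵢ, and θ ∈ [0,1). Then the θ-aggregated set C^θ = {c : (1/n)·Σᵢ 1{c ∈ Cᵢ} > θ} satisfies P(c* ∈ C^θ) ≥ 1 − (1/(1−θ))·(1/n)·Σᵢ αᵢ. -/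
open MeasureTheory
open scoped Classical

/-!
Count the sets that miss `c*`: by Markov's inequality the expected miss count `∑ αᵢ` bounds
the probability that at least `n (1 - θ)` of them miss, and outside that event more than `n θ`
of the sets contain `c*`. No independence is needed, only linearity of expectation.
-/

namespace MeasureTheory

variable {Ω ι : Type*} [Fintype ι] {A : ι → Set Ω}

lemma sum_indicator_compl_eq_card_sub (ω : Ω) :
    ∑ i, (A i)ᶜ.indicator (1 : Ω → ℝ) ω = Fintype.card ι - ∑ i, (A i).indicator 1 ω := by
  simp [Set.indicator_compl, Finset.sum_sub_distrib]

variable [MeasurableSpace Ω] {μ : Measure Ω}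

lemma measureReal_compl_le_of_ofReal_one_sub_le [IsProbabilityMeasure μ] {s : Set Ω}
    (hs : MeasurableSet s) {a : ℝ} (h : ENNReal.ofReal (1 - a) ≤ μ s) : μ.real sᶜ ≤ a := by
  rw [ENNReal.ofReal_le_iff_le_toReal (measure_ne_top μ s), ← measureReal_def] at h
  rw [probReal_compl_eq_one_sub hs]
  linarith

lemma mul_measureReal_sum_indicator_ge_le_sum [IsFiniteMeasure μ] (hA : ∀ i, MeasurableSet (A i))
    (ε : ℝ) : ε * μ.real {ω | ε ≤ ∑ i, (A i).indicator 1 ω} ≤ ∑ i, μ.real (A i) := by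
  have hint : ∀ i, Integrable ((A i).indicator (1 : Ω → ℝ)) μ := fun i =>
    (integrable_const 1).indicator (hA i)
  calc ε * μ.real {ω | ε ≤ ∑ i, (A i).indicator 1 ω}
      ≤ ∫ ω, ∑ i, (A i).indicator 1 ω ∂μ :=
        mul_meas_ge_le_integral_of_nonneg
          (Filter.Eventually.of_forall fun ω => Finset.sum_nonneg fun i _ =>
            Set.indicator_nonneg (fun _ _ => zero_le_one) ω)
          (integrable_finsetSum _ fun i _ => hint i) ε
    _ = ∑ i, μ.real (A i) := by
        rw [integral_finsetSum _ fun i _ => hint i]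
        exact Finset.sum_congr rfl fun i _ => integral_indicator_one (hA i)

lemma one_sub_le_measureReal_average_indicator_gt [IsProbabilityMeasure μ] [Nonempty ι]
    (hA : ∀ i, MeasurableSet (A i)) {α : ι → ℝ} (hα : ∀ i, μ.real (A i)ᶜ ≤ α i)
    {θ : ℝ} (hθ : θ < 1) :
    1 - (1 / (1 - θ)) * ((1 / Fintype.card ι : ℝ) * ∑ i, α i) ≤
      μ.real {ω | θ < (1 / Fintype.card ι : ℝ) * ∑ i, (A i).indicator 1 ω} := by
  set n : ℝ := (Fintype.card ι : ℝ)
  have hn : 0 < n := by simp [n, Fintype.card_pos]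
  set ε := n * (1 - θ)
  have hε : 0 < ε := mul_pos hn (by linarith)
  set bad := {ω | ε ≤ ∑ i, (A i)ᶜ.indicator 1 ω}
  have hbad : μ.real bad ≤ (∑ i, α i) / ε := by
    rw [le_div_iff₀ hε, mul_comm]
    exact (mul_measureReal_sum_indicator_ge_le_sum (fun i => (hA i).compl) ε).trans
      (Finset.sum_le_sum fun i _ => hα i)
  have hgood : badᶜ ⊆ {ω | θ < (1 / n) * ∑ i, (A i).indicator 1 ω} := by
    intro ω hω
    simp only [bad, Set.mem_compl_iff, Set.mem_ofPred_eq, not_le,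
      sum_indicator_compl_eq_card_sub] at hω ⊢
    rw [one_div_mul_eq_div, lt_div_iff₀ hn]
    linarith
  have hbad_meas : MeasurableSet bad :=
    measurableSet_le measurable_const
      (Finset.measurable_sum _ fun i _ => measurable_const.indicator (hA i).compl)
  calc 1 - (1 / (1 - θ)) * ((1 / n) * ∑ i, α i)
      = 1 - (∑ i, α i) / ε := by simp only [ε]; field_simp
    _ ≤ 1 - μ.real bad := by linarith
    _ = μ.real badᶜ := (probReal_compl_eq_one_sub hbad_meas).symm
    _ ≤ _ := measureReal_mono hgood

end MeasureTheory

theorem aggregated_coverage_heterogeneous_general {Ω : Type*} [MeasurableSpace Ω] (μ : Measure Ω)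
    [IsProbabilityMeasure μ] {𝒴 : Type*} (n : ℕ) (hn : 0 < n)
    (C : Fin n → Ω → Set 𝒴) (cstar : 𝒴)
    (hmeas : ∀ i (c : 𝒴), MeasurableSet {ω | c ∈ C i ω})
    (α : Fin n → ℝ) (hcov : ∀ i, ENNReal.ofReal (1 - α i) ≤ μ {ω | cstar ∈ C i ω})
    (θ : ℝ) (hθ1 : θ < 1) :
    ENNReal.ofReal (1 - (1 / (1 - θ)) * ((1 / n : ℝ) * ∑ i, α i)) ≤
      μ {ω | θ < (1 / n : ℝ) * ∑ i, (if cstar ∈ C i ω then (1 : ℝ) else 0)} := by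
  have : Nonempty (Fin n) := Fin.pos_iff_nonempty.mp hn
  have hA i := hmeas i cstar
  have key := one_sub_le_measureReal_average_indicator_gt hA
    (fun i => measureReal_compl_le_of_ofReal_one_sub_le (hA i) (hcov i)) hθ1
  rw [ENNReal.ofReal_le_iff_le_toReal (measure_ne_top μ _)]
  simpa [Set.indicator_apply, measureReal_def] using key

/-- Heterogeneous generalization of Theorem 1: aggregation of prediction sets with
individual error levels αᵢ. -/
theorem aggregated_coverage_heterogeneous {Ω : Type*} [MeasurableSpace Ω] (μ : Measure Ω)
    [IsProbabilityMeasure μ] {𝒴 : Type*} [Fintype 𝒴] (n : ℕ) (hn : 0 < n)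
    (C : Fin n → Ω → Set 𝒴) (cstar : 𝒴)
    (hmeas : ∀ i (c : 𝒴), MeasurableSet {ω | c ∈ C i ω})
    (α : Fin n → ℝ) (hcov : ∀ i, ENNReal.ofReal (1 - α i) ≤ μ {ω | cstar ∈ C i ω})
    (θ : ℝ) (hθ0 : 0 ≤ θ) (hθ1 : θ < 1) :
    ENNReal.ofReal (1 - (1 / (1 - θ)) * ((1 / n : ℝ) * ∑ i, α i)) ≤
      μ {ω | θ < (1 / n : ℝ) * ∑ i, (if cstar ∈ C i ω then (1 : ℝ) else 0)} :=
  aggregated_coverage_heterogeneous_general μ n hn C cstar hmeas α hcov θ hθ1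
end
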